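/- arXiv:1106.5522 — 4 statements merged into one kernel-verified Lean document; each statement's English description precedes it below -/
import Mathlib

section
/- If k is even and k < n, then the number D_k(n) of k-derangements in S_n is even. -/
def IsKDerangement (n k : ℕ) (σ : Equiv.Perm (Fin n)) : Prop :=
  ∀ X : Finset (Fin n), X.card = k → X.image σ ≠ X

lemma IsKDerangement.inv {n k : ℕ} {σ : Equiv.Perm (Fin n)}
    (h : IsKDerangement n k σ) : IsKDerangement n k σ⁻¹ := by
  intro X hX hfix
  refine h X hX ?_
  nth_rewrite 1 [← hfix]
  rw [Finset.image_image]
  simp [Function.comp_def]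

def derangementGraph (n k : ℕ) : SimpleGraph (Equiv.Perm (Fin n)) where
  Adj σ τ := σ ≠ τ ∧ IsKDerangement n k (σ * τ⁻¹)
  symm := by
    constructor
    rintro σ τ ⟨hne, h⟩
    exact ⟨hne.symm, by simpa [mul_inv_rev] using h.inv⟩
  loopless := by constructor; rintro σ ⟨hne, -⟩; exact hne rfl

noncomputable def numKDerangements (n k : ℕ) : ℕ :=
  Nat.card {σ : Equiv.Perm (Fin n) // IsKDerangement n k σ}

noncomputable def indepNum {V : Type*} (G : SimpleGraph V) : ℕ :=
  sSup {m | ∃ s : Finset V, (∀ a ∈ s, ∀ b ∈ s, a ≠ b → ¬ G.Adj a b) ∧ s.card = m}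

/-!
Inversion is an involution on the set of `k`-derangements, so its size has the parity of the
number of self-inverse `k`-derangements. There are none: the orbits of an involution have size
one or two, so for even `k ≤ n` a union of orbits of total size `k` can always be assembled.
-/

open Function

section

variable {α : Type*} [DecidableEq α]

theorem Finset.image_eq_self_of_mapsTo {f : α → α} (hf : Injective f) {X : Finset α}
    (h : ∀ x ∈ X, f x ∈ X) : X.image f = X :=
  Finset.eq_of_subset_of_card_le (Finset.image_subset_iff.2 h)
    (Finset.card_image_of_injective X hf).ge

theorem Function.Involutive.exists_subset_card_two_mapsTo {f : α → α} (hf : Involutive f)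
    {S : Finset α} (hS : ∀ x ∈ S, f x ∈ S) (hcard : 2 ≤ S.card) :
    ∃ T ⊆ S, T.card = 2 ∧ ∀ x ∈ T, f x ∈ T := by
  by_cases hmoved : ∃ x ∈ S, f x ≠ x
  · obtain ⟨x, hxS, hfx⟩ := hmoved
    refine ⟨{x, f x}, ?_, Finset.card_pair hfx.symm, ?_⟩
    · simp [Finset.insert_subset_iff, hxS, hS x hxS]
    · simp [hf x]
  · push Not at hmoved
    obtain ⟨T, hTS, hT⟩ := Finset.exists_subset_card_eq hcard
    exact ⟨T, hTS, hT, fun x hx => (hmoved x (hTS hx)).symm ▸ hx⟩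

theorem Function.Involutive.exists_card_eq_mapsTo [Fintype α] {f : α → α} (hf : Involutive f)
    {m : ℕ} (hm : Even m) (hmα : m ≤ Fintype.card α) :
    ∃ X : Finset α, X.card = m ∧ ∀ x ∈ X, f x ∈ X := by
  obtain ⟨j, rfl⟩ := hm
  induction j with
  | zero => exact ⟨∅, by simp⟩
  | succ j ih =>
    obtain ⟨X, hXcard, hX⟩ := ih (by omega)
    have hXc : ∀ x ∈ Xᶜ, f x ∈ Xᶜ := fun x hx => by
      simpa using fun hfx => (Finset.mem_compl.1 hx) (hf x ▸ hX _ hfx)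
    obtain ⟨T, hTX, hTcard, hT⟩ :=
      hf.exists_subset_card_two_mapsTo hXc (by rw [Finset.card_compl]; omega)
    have hdisj : Disjoint X T := Finset.disjoint_of_subset_right hTX disjoint_compl_right
    refine ⟨X ∪ T, by rw [Finset.card_union_of_disjoint hdisj]; omega, fun x hx => ?_⟩
    rcases Finset.mem_union.1 hx with hx | hx
    exacts [Finset.mem_union_left _ (hX x hx), Finset.mem_union_right _ (hT x hx)]

theorem Function.Involutive.even_card_of_forall_ne [Fintype α] {f : α → α} (hf : Involutive f)
    (hfix : ∀ x, f x ≠ x) : Even (Fintype.card α) := by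
  have hsq : hf.toPerm ^ 2 = 1 := Equiv.ext fun x => hf x
  have hsupp : hf.toPerm.support = Finset.univ := by
    ext x
    simpa using hfix x
  simpa [hsupp, even_iff_two_dvd] using Equiv.Perm.two_dvd_card_support hsq

end

theorem not_isKDerangement_of_involutive {n k : ℕ} {σ : Equiv.Perm (Fin n)}
    (hσ : Involutive σ) (hk : Even k) (hkn : k ≤ n) : ¬ IsKDerangement n k σ := by
  intro hder
  obtain ⟨X, hXcard, hX⟩ := hσ.exists_card_eq_mapsTo hk (by simpa using hkn)
  exact hder X hXcard (Finset.image_eq_self_of_mapsTo σ.injective hX)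

/-- If `k` is even and `k < n`, then the number of `k`-derangements in `S_n` is even. -/
theorem even_numKDerangements_of_even (n k : ℕ) (hk : Even k) (hkn : k < n) :
    Even (numKDerangements n k) := by
  classical
  let inv : {σ // IsKDerangement n k σ} → {σ // IsKDerangement n k σ} :=
    fun σ => ⟨σ.1⁻¹, σ.2.inv⟩
  have hinv : Involutive inv := fun σ => Subtype.ext (inv_inv σ.1)
  have hfix : ∀ σ, inv σ ≠ σ := by
    rintro ⟨σ, hσ⟩ hself
    have hσσ : σ⁻¹ = σ := congrArg Subtype.val hself
    have hσ_invol : Involutive σ := fun a => Equiv.Perm.eq_inv_iff_eq.1 (by rw [hσσ])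
    exact not_isKDerangement_of_involutive hσ_invol hk hkn.le hσ
  rw [numKDerangements, Nat.card_eq_fintype_card]
  exact hinv.even_card_of_forall_ne hfix
end

section
/- If k is odd, n is even, and k < n, then the number D_k(n) of k-derangements in S_n is odd. -/
/-!
Inversion is an involution on the set of `k`-derangements, so `D_k(n)` has the parity of the
number of self-inverse ones. An involution with a fixed point leaves invariant a set of every
size up to `n` (start from `∅` or a fixed point and repeatedly add a 2-cycle or two fixed points),
whereas every invariant set of a fixed-point-free involution is a union of 2-cycles and has even
size. So for odd `k ≤ n` the self-inverse `k`-derangements are exactly the fixed-point-free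
involutions, and for `n = 2m` there are `(2m - 1)‼` of those, an odd number.
-/

open Finset Equiv Equiv.Perm Nat

theorem Function.Involutive.card_modEq_card_filter_apply_eq_self {α : Type*} [DecidableEq α]
    {f : α → α} (hf : Function.Involutive f) {s : Finset α} (hs : ∀ a ∈ s, f a ∈ s) :
    #s ≡ #{a ∈ s | f a = a} [MOD 2] := by
  let g : Perm s := (hf.toPerm f).subtypePerm fun a => ⟨fun h => hf a ▸ hs _ h, hs a⟩
  have hg : g ^ 2 ^ 1 = 1 := by ext a; simp [g, sq, hf _]
  have hfix : g.supportᶜ.map (Embedding.subtype _) = {a ∈ s | f a = a} := by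
    ext a
    simp only [mem_map, mem_compl, Perm.mem_support, not_not, Embedding.coe_subtype, mem_filter]
    simp [g, and_comm]
  rw [← hfix, card_map, ← Fintype.card_coe s]
  exact (card_compl_support_modEq hg).symm

theorem Nat.odd_doubleFactorial_two_mul_add_one (n : ℕ) : Odd (2 * n + 1)‼ := by
  induction n with
  | zero => exact odd_one
  | succ n ih =>
    rw [show 2 * (n + 1) + 1 = 2 * n + 1 + 2 by ring, doubleFactorial_add_two]
    exact (odd_two_mul_add_one (n + 1)).mul ih

namespace Equiv.Perm

variable {α : Type*}

theorem involutive_of_sq_eq_one {σ : Perm α} (hσ : σ ^ 2 = 1) : Function.Involutive σ :=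
  fun x => by rw [← mul_apply, ← sq, hσ, one_apply]

variable [DecidableEq α]

theorem exists_subset_image_eq_self_card_eq_two {σ : Perm α} (hσ : σ ^ 2 = 1) {T : Finset α}
    (hT : ∀ x ∈ T, σ x ∈ T) (hcard : 2 ≤ #T) : ∃ P ⊆ T, P.image σ = P ∧ #P = 2 := by
  by_cases hfix : ∀ x ∈ T, σ x = x
  · obtain ⟨P, hPT, hP⟩ := exists_subset_card_eq hcard
    exact ⟨P, hPT, (image_congr fun y hy => hfix y (hPT hy)).trans image_id, hP⟩
  · push Not at hfix
    obtain ⟨x, hxT, hx⟩ := hfix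
    refine ⟨{x, σ x}, insert_subset hxT (singleton_subset_iff.mpr (hT x hxT)), ?_,
      card_pair hx.symm⟩
    rw [image_insert, image_singleton, involutive_of_sq_eq_one hσ x, pair_comm]

theorem exists_image_eq_self_card_add_two [Fintype α] {σ : Perm α} (hσ : σ ^ 2 = 1)
    {X : Finset α} (hX : X.image σ = X) (hcard : #X + 2 ≤ Fintype.card α) :
    ∃ Y : Finset α, Y.image σ = Y ∧ #Y = #X + 2 := by
  have hXc : ∀ x ∈ Xᶜ, σ x ∈ Xᶜ := by
    intro x hx
    rw [mem_compl] at hx ⊢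
    intro hσx
    exact hx (involutive_of_sq_eq_one hσ x ▸ hX ▸ mem_image_of_mem σ hσx)
  obtain ⟨P, hPX, hP, hPcard⟩ := exists_subset_image_eq_self_card_eq_two hσ hXc
    (by rw [card_compl]; omega)
  have hdisj : _root_.Disjoint X P := disjoint_of_subset_right hPX disjoint_compl_right
  exact ⟨X ∪ P, by rw [image_union, hX, hP], by rw [card_union_of_disjoint hdisj, hPcard]⟩

theorem exists_image_eq_self_card_eq [Fintype α] {σ : Perm α} (hσ : σ ^ 2 = 1) {x : α}
    (hx : σ x = x) : ∀ k ≤ Fintype.card α, ∃ X : Finset α, X.image σ = X ∧ #X = k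
  | 0, _ => ⟨∅, by simp⟩
  | 1, _ => ⟨{x}, by simp [hx]⟩
  | k + 2, hk => by
    obtain ⟨X, hX, rfl⟩ := exists_image_eq_self_card_eq hσ hx k (by omega)
    exact exists_image_eq_self_card_add_two hσ hX hk

theorem even_card_of_image_eq_self {σ : Perm α} (hσ : σ ^ 2 = 1) (hfree : ∀ x, σ x ≠ x)
    {X : Finset α} (hX : X.image σ = X) : Even #X := by
  have hpar := (involutive_of_sq_eq_one hσ).card_modEq_card_filter_apply_eq_self
    (s := X) fun x hx => hX ▸ mem_image_of_mem σ hx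
  rw [filter_false_of_mem fun x _ => hfree x, card_empty] at hpar
  exact even_iff.mpr hpar

variable [Fintype α]

theorem cycleType_eq_replicate_two_iff {m : ℕ} (hα : Fintype.card α = 2 * m) {σ : Perm α} :
    σ.cycleType = Multiset.replicate m 2 ↔ σ ^ 2 = 1 ∧ ∀ x, σ x ≠ x := by
  constructor
  · intro h
    refine ⟨pow_prime_eq_one_iff.mpr fun c hc => ?_, fun x => ?_⟩
    · rw [h] at hc; exact Multiset.eq_of_mem_replicate hc
    · have hsupp : #σ.support = Fintype.card α := by
        rw [← sum_cycleType, h, Multiset.sum_replicate, smul_eq_mul, hα, mul_comm]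
      rw [← mem_support, Finset.eq_univ_of_card _ hsupp]
      exact mem_univ x
  · rintro ⟨hsq, hfree⟩
    have hsupp : σ.support = univ := eq_univ_of_forall fun x => mem_support.mpr (hfree x)
    have hsum := sum_cycleType σ
    rw [cycleType_of_pow_prime_eq_one hsq] at hsum ⊢
    rw [Multiset.sum_replicate, hsupp, Finset.card_univ, hα, smul_eq_mul] at hsum
    congr 1
    omega

theorem odd_card_cycleType_eq_replicate_two {m : ℕ} (hα : Fintype.card α = 2 * m) :
    Odd #{σ : Perm α | σ.cycleType = Multiset.replicate m 2} := by
  have key := card_of_cycleType_mul_eq α (Multiset.replicate m 2)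
  rw [if_pos ⟨by simp [hα, mul_comm], fun a ha => (Multiset.eq_of_mem_replicate ha).ge⟩,
    Multiset.sum_replicate, hα, smul_eq_mul, mul_comm m, Nat.sub_self, factorial_zero, one_mul,
    Multiset.prod_replicate, Multiset.toFinset_replicate] at key
  rcases m with _ | m
  · rw [if_pos rfl, prod_empty, pow_zero, mul_one, mul_one] at key
    rw [key]
    exact odd_one
  · have hfac : (2 * (m + 1))! = (2 * m + 1)‼ * (2 ^ (m + 1) * (m + 1)!) := by
      rw [show 2 * (m + 1) = 2 * m + 1 + 1 by ring, factorial_eq_mul_doubleFactorial,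
        show 2 * m + 1 + 1 = 2 * (m + 1) by ring, doubleFactorial_two_mul, mul_comm]
    rw [if_neg m.succ_ne_zero, prod_singleton, Multiset.count_replicate_self, hfac] at key
    rw [Nat.eq_of_mul_eq_mul_right (by positivity) key]
    exact odd_doubleFactorial_two_mul_add_one m

end Equiv.Perm

theorem isKDerangement_iff_forall_apply_ne {n k : ℕ} (hk : Odd k) (hkn : k ≤ n)
    {σ : Equiv.Perm (Fin n)} (hσ : σ ^ 2 = 1) : IsKDerangement n k σ ↔ ∀ x, σ x ≠ x := by
  constructor
  · intro hder x hx
    obtain ⟨X, hX, hXk⟩ := exists_image_eq_self_card_eq hσ hx k (by simpa using hkn)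
    exact hder X hXk hX
  · intro hfree X hXk hX
    exact (Nat.not_even_iff_odd.mpr hk) (hXk ▸ even_card_of_image_eq_self hσ hfree hX)

/-- If `k` is odd, `n` is even, and `k < n`, then the number of `k`-derangements
in `S_n` is odd. -/
theorem odd_numKDerangements_of_odd_even (n k : ℕ) (hk : Odd k) (hn : Even n) (hkn : k < n) :
    Odd (numKDerangements n k) := by
  classical
  obtain ⟨m, hm⟩ := hn
  have hα : Fintype.card (Fin n) = 2 * m := by rw [Fintype.card_fin, hm, two_mul]
  set D : Finset (Perm (Fin n)) := {σ | IsKDerangement n k σ}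
  have hparity := inv_involutive.card_modEq_card_filter_apply_eq_self (s := D)
    fun σ hσ => mem_filter.mpr ⟨mem_univ _, (mem_filter.mp hσ).2.inv⟩
  have hfix : D.filter (fun σ => σ⁻¹ = σ) =
      ({σ | σ.cycleType = Multiset.replicate m 2} : Finset (Perm (Fin n))) := by
    ext σ
    rw [mem_filter, mem_filter, mem_filter, cycleType_eq_replicate_two_iff hα,
      inv_eq_iff_mul_eq_one, ← sq]
    simp only [mem_univ, true_and]
    rw [and_comm]
    exact and_congr_right (isKDerangement_iff_forall_apply_ne hk hkn.le)
  rw [numKDerangements, Nat.card_eq_fintype_card, Fintype.card_subtype, Nat.odd_iff, hparity, hfix]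
  exact Nat.odd_iff.mp (odd_card_cycleType_eq_replicate_two hα)
end

section
/- For k < n, the clique number of the k-derangement graph satisfies ω(Γ_{k,n}) ≤ C(n,k), the binomial coefficient n choose k. -/
/-- `X.image σ = X.image τ` would make the `k`-set `X.image τ` invariant under `σ * τ⁻¹`. -/
lemma image_ne_image_of_adj_derangementGraph {n k : ℕ} {σ τ : Equiv.Perm (Fin n)}
    (h : (derangementGraph n k).Adj σ τ) {X : Finset (Fin n)} (hX : X.card = k) :
    X.image σ ≠ X.image τ := by
  intro heq
  refine h.2 (X.image τ) (by rw [Finset.card_image_of_injective _ τ.injective, hX]) ?_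
  rw [Finset.image_image, ← heq]
  congr 1
  ext x
  simp

lemma card_le_choose_of_isClique_derangementGraph {n k : ℕ} (hk : k ≤ n)
    {s : Finset (Equiv.Perm (Fin n))} (hs : (derangementGraph n k).IsClique s) :
    s.card ≤ n.choose k := by
  obtain ⟨X, -, hX⟩ := Finset.exists_subset_card_eq
    (show k ≤ (Finset.univ : Finset (Fin n)).card by simpa using hk)
  calc s.card ≤ (Finset.univ.powersetCard k : Finset (Finset (Fin n))).card := by
        refine Finset.card_le_card_of_injOn (fun σ => X.image σ) (fun σ _ => ?_) ?_
        · simp [Finset.card_image_of_injective _ σ.injective, hX]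
        · intro σ hσ τ hτ heq
          by_contra hne
          exact image_ne_image_of_adj_derangementGraph (hs hσ hτ hne) hX heq
    _ = n.choose k := by simp

/-- For `k < n`, the clique number of the `k`-derangement graph is at most `C(n,k)`. -/
theorem cliqueNum_derangementGraph_le (n k : ℕ) (hk : k < n) :
    (derangementGraph n k).cliqueNum ≤ n.choose k := by
  obtain ⟨s, hs⟩ := (derangementGraph n k).exists_isNClique_cliqueNum
  exact hs.card_eq ▸ card_le_choose_of_isClique_derangementGraph hk.le hs.isClique
end

section
/- If n = p^m is a power of an odd prime p (with m ≥ 1), then the clique number of the 2-derangement graph satisfies ω(Γ_{2,n}) = C(n,2) = n(n−1)/2. -/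
/-!
Upper bound: fix a 2-set `X₀`. On a clique the map `σ ↦ σ X₀` is injective, since `σ X₀ = τ X₀`
would make `τ X₀` invariant under `σ τ⁻¹`; so a clique has at most `C(n, 2)` elements.

Lower bound: identify `{1, …, n}` with the field `𝔽_q`, `q = p ^ m`, and take the affine maps
`x ↦ a x + b` with `b ∈ 𝔽_q` and `a` running over representatives of `𝔽_q^× / {±1}`; there are
`q (q - 1) / 2` of them. Two of them differ by an affine map `x ↦ s x + t ≠ id` with `s ≠ -1`, and
such a map has no invariant pair: fixing both points of a pair forces `s = 1, t = 0`, swapping them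
forces `s = -1`.
-/

open Equiv Finset

lemma IsKDerangement.image_ne_image {n k : ℕ} {σ τ : Perm (Fin n)}
    (h : IsKDerangement n k (σ * τ⁻¹)) {X : Finset (Fin n)} (hX : X.card = k) :
    X.image σ ≠ X.image τ := by
  intro hστ
  refine h (X.image τ) (by rwa [card_image_of_injective _ τ.injective]) ?_
  rw [image_image, ← hστ]
  congr 1
  funext x
  simp

lemma cliqueNum_derangementGraph_le_choose {n k : ℕ} (hk : k ≤ n) :
    (derangementGraph n k).cliqueNum ≤ n.choose k := by
  obtain ⟨s, hs⟩ := (derangementGraph n k).exists_isNClique_cliqueNum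
  obtain ⟨X, -, hX⟩ := (univ : Finset (Fin n)).exists_subset_card_eq (by simpa using hk)
  calc (derangementGraph n k).cliqueNum = s.card := hs.card_eq.symm
    _ ≤ ((univ : Finset (Fin n)).powersetCard k).card := ?_
    _ = n.choose k := by simp
  refine card_le_card_of_injOn (fun σ => X.image σ) (fun σ _ => ?_) ?_
  · simpa [card_image_of_injective _ σ.injective] using hX
  · intro σ hσ τ hτ hστ
    by_contra hne
    exact (hs.isClique hσ hτ hne).2.image_ne_image hX hστ

lemma isKDerangement_permCongr_iff {α : Type*} {n k : ℕ} (e : α ≃ Fin n) (σ : Perm α) :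
    IsKDerangement n k (e.permCongr σ) ↔
      ∀ X : Finset α, X.card = k → X.map σ.toEmbedding ≠ X := by
  classical
  have hmap (X : Finset α) : (X.map e.toEmbedding).image (e.permCongr σ) =
      (X.map σ.toEmbedding).map e.toEmbedding := by
    ext y
    simp only [mem_image, mem_map_equiv, permCongr_apply]
    exact ⟨by rintro ⟨z, hz, rfl⟩; simpa using hz,
      fun hy => ⟨e (σ.symm (e.symm y)), by simpa using hy, by simp⟩⟩
  refine ⟨fun h X hX hσX => h (X.map e.toEmbedding) (by simpa) (by rw [hmap, hσX]),
    fun h Y hY hσY => h (Y.map e.symm.toEmbedding) (by simpa) ?_⟩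
  rw [← map_injective e.toEmbedding |>.eq_iff, ← hmap]
  simpa [map_map] using hσY

lemma Equiv.Perm.fixes_or_swaps_of_map_pair_eq {α : Type*} [DecidableEq α] {σ : Perm α}
    {x y : α} (hxy : x ≠ y) (h : ({x, y} : Finset α).map σ.toEmbedding = {x, y}) :
    σ x = x ∧ σ y = y ∨ σ x = y ∧ σ y = x := by
  have hx : σ x ∈ ({x, y} : Finset α) := h ▸ mem_map_of_mem _ (by simp)
  have hy : σ y ∈ ({x, y} : Finset α) := h ▸ mem_map_of_mem _ (by simp)
  have hσ : σ x ≠ σ y := σ.injective.ne hxy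
  simp only [mem_insert, mem_singleton] at hx hy
  grind

lemma Subgroup.IsComplement.ne_mul {G : Type*} [Group G] {S : Set G} {H : Subgroup G}
    (hS : Subgroup.IsComplement S H) {a c h : G} (ha : a ∈ S) (hc : c ∈ S) (hH : h ∈ H)
    (h1 : h ≠ 1) : a ≠ c * h := by
  intro hac
  have := @hS.1 (⟨a, ha⟩, ⟨1, H.one_mem⟩) (⟨c, hc⟩, ⟨h, hH⟩) (by simpa using hac)
  exact h1 congr(($this).2.1).symm

section Affine

variable {K : Type*} [Ring K]

def affinePerm (a : Kˣ) (b : K) : Perm K :=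
  (Units.mulLeft a).trans (Equiv.addRight b)

@[simp]
lemma affinePerm_apply (a : Kˣ) (b x : K) : affinePerm a b x = a * x + b :=
  rfl

lemma affinePerm_injective : Function.Injective fun z : Kˣ × K => affinePerm z.1 z.2 := by
  rintro ⟨a, b⟩ ⟨c, d⟩ h
  have h0 : b = d := by simpa using congr($h 0)
  have h1 : (a : K) + b = c + d := by simpa using congr($h 1)
  exact Prod.ext (Units.ext (by rw [h0] at h1; exact add_right_cancel h1)) h0

lemma affinePerm_mul_inv (a c : Kˣ) (b d : K) :
    affinePerm a b * (affinePerm c d)⁻¹ = affinePerm (a * c⁻¹) (b - ↑(a * c⁻¹) * d) := by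
  rw [mul_inv_eq_iff_eq_mul]
  ext x
  simp [mul_add, ← mul_assoc]

lemma map_affinePerm_ne_self [NoZeroDivisors K] {a : Kˣ} {b : K} (ha : a ≠ -1)
    (hab : affinePerm a b ≠ 1) {X : Finset K} (hX : X.card = 2) :
    X.map (affinePerm a b).toEmbedding ≠ X := by
  classical
  intro hfix
  obtain ⟨x, y, hxy, rfl⟩ := card_eq_two.mp hX
  have hxy' : x - y ≠ 0 := sub_ne_zero.mpr hxy
  rcases Perm.fixes_or_swaps_of_map_pair_eq hxy hfix with ⟨hx, hy⟩ | ⟨hx, hy⟩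
  · have h : ((a : K) - 1) * (x - y) = 0 := by
      calc ((a : K) - 1) * (x - y) = (a * x + b - x) - (a * y + b - y) := by noncomm_ring
        _ = 0 := by simp_all
    have ha1 : a = 1 := Units.ext (sub_eq_zero.mp ((mul_eq_zero.mp h).resolve_right hxy'))
    have hb0 : b = 0 := by simpa [ha1] using hx
    exact hab (by ext; simp [ha1, hb0])
  · have h : ((a : K) + 1) * (x - y) = 0 := by
      calc ((a : K) + 1) * (x - y) = (a * x + b - y) - (a * y + b - x) := by noncomm_ring
        _ = 0 := by simp_all
    have ha1 : (a : K) + 1 = 0 := (mul_eq_zero.mp h).resolve_right hxy'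
    exact ha (Units.ext (by simpa using eq_neg_of_add_eq_zero_left ha1))

lemma isClique_image_affinePerm [NoZeroDivisors K] {n : ℕ} (e : K ≃ Fin n) {S : Set Kˣ}
    (hS : ∀ a ∈ S, ∀ c ∈ S, a ≠ -c) :
    (derangementGraph n 2).IsClique
      ((fun z : Kˣ × K => e.permCongr (affinePerm z.1 z.2)) '' (S ×ˢ Set.univ)) := by
  rintro _ ⟨⟨a, b⟩, ⟨ha, -⟩, rfl⟩ _ ⟨⟨c, d⟩, ⟨hc, -⟩, rfl⟩ hne
  refine ⟨hne, ?_⟩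
  have hmul (σ τ : Perm K) : e.permCongr σ * (e.permCongr τ)⁻¹ = e.permCongr (σ * τ⁻¹) :=
    (map_mul_inv e.permCongrHom σ τ).symm
  dsimp only at hne ⊢
  rw [hmul, affinePerm_mul_inv, isKDerangement_permCongr_iff]
  refine fun X hX => map_affinePerm_ne_self ?_ ?_ hX
  · rw [Ne, mul_inv_eq_iff_eq_mul, neg_one_mul]
    exact hS a ha c hc
  · rw [← affinePerm_mul_inv, Ne, mul_inv_eq_one]
    exact fun h => hne (by rw [h])

end Affine

lemma choose_two_le_cliqueNum_derangementGraph {K : Type*} [Field K] [Finite K]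
    (hK : ringChar K ≠ 2) :
    (Nat.card K).choose 2 ≤ (derangementGraph (Nat.card K) 2).cliqueNum := by
  obtain ⟨S, hS, -⟩ := Subgroup.exists_isComplement_left (Subgroup.zpowers (-1 : Kˣ)) 1
  have hneg : (-1 : Kˣ) ≠ 1 := fun h =>
    Ring.neg_one_ne_one_of_char_ne_two hK (by simpa using congr_arg Units.val h)
  have hcardS : Nat.card S * 2 = Nat.card K - 1 := by
    rw [← Nat.card_units, ← hS.card_mul_card, SetLike.coe_sort_coe, Nat.card_zpowers,
      ← orderOf_units, Units.val_neg, Units.val_one, orderOf_neg_one, if_neg hK]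
  set e := Finite.equivFin K
  set T := (fun z : Kˣ × K => e.permCongr (affinePerm z.1 z.2)) '' (S ×ˢ Set.univ)
  have hclique : (derangementGraph (Nat.card K) 2).IsClique T :=
    isClique_image_affinePerm e fun a ha c hc => by
      rw [← mul_neg_one]; exact hS.ne_mul ha hc (Subgroup.mem_zpowers _) hneg
  have hT : T.ncard = (Nat.card K).choose 2 := by
    have hinj : Function.Injective fun z : Kˣ × K => e.permCongr (affinePerm z.1 z.2) :=
      e.permCongr.injective.comp affinePerm_injective
    rw [Set.ncard_image_of_injective _ hinj,
      Set.ncard_prod, Set.ncard_univ, ← Nat.card_coe_set_eq, Nat.choose_two_right, ← hcardS,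
      ← mul_assoc, Nat.mul_div_cancel _ two_pos, mul_comm]
  calc _ = T.ncard := hT.symm
    _ = T.toFinite.toFinset.card := Set.ncard_eq_toFinset_card _
    _ ≤ _ := SimpleGraph.IsClique.card_le_cliqueNum (tc := by simpa using hclique)
/-- If `n = p^m` is a power of an odd prime, then the clique number of the
`2`-derangement graph equals `C(n,2) = n(n-1)/2`. -/
theorem cliqueNum_derangementGraph_two (n p m : ℕ) (hp : p.Prime) (hodd : Odd p)
    (hm : 1 ≤ m) (hn : n = p ^ m) :
    (derangementGraph n 2).cliqueNum = n.choose 2 ∧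
      (derangementGraph n 2).cliqueNum = n * (n - 1) / 2 := by
  have : Fact p.Prime := ⟨hp⟩
  have hcard : Nat.card (GaloisField p m) = n := by rw [GaloisField.card p m (by omega), hn]
  have : Finite (GaloisField p m) :=
    Nat.finite_of_card_ne_zero (hcard ▸ hn ▸ (pow_pos hp.pos m).ne')
  have hchar : ringChar (GaloisField p m) ≠ 2 := by
    rw [ringChar.eq _ p]
    rintro rfl
    exact Nat.not_odd_iff_even.mpr even_two hodd
  have htwo : 2 ≤ n := hn ▸ hp.two_le.trans (Nat.le_self_pow (by omega) p)
  have hclique : (derangementGraph n 2).cliqueNum = n.choose 2 :=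
    le_antisymm (cliqueNum_derangementGraph_le_choose htwo)
      (hcard ▸ choose_two_le_cliqueNum_derangementGraph hchar)
  exact ⟨hclique, hclique.trans (Nat.choose_two_right n)⟩
end
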